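/- The two-sided Skorokhod map output lies in [0, α]: for α > 0 and any bounded càdlàg-type function ψ : [0,T] → ℝ with ψ(0) ≥ 0, the composition Γ^{0,α}(ψ)(t) = Λ^α(Γ⁰(ψ))(t) satisfies 0 ≤ Γ^{0,α}(ψ)(t) ≤ α for every t ∈ [0,T]. -/
import Mathlib


/-- One-sided Skorokhod map associated with the domain `[0, ∞)`. -/
noncomputable def Gamma0 (ψ : ℝ → ℝ) (t : ℝ) : ℝ :=
  ψ t + sSup ((fun s => max 0 (-ψ s)) '' Set.Icc 0 t)

/-- The map `Λ^α` used in the explicit formula for the two-sided Skorokhod map. -/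
noncomputable def LambdaA (α : ℝ) (φ : ℝ → ℝ) (t : ℝ) : ℝ :=
  φ t - sSup ((fun s => min (max 0 (φ s - α)) (sInf (φ '' Set.Icc s t))) '' Set.Icc 0 t)

/-- Two-sided Skorokhod map associated with the domain `[0, α]`. -/
noncomputable def Gamma0A (α : ℝ) (ψ : ℝ → ℝ) (t : ℝ) : ℝ :=
  LambdaA α (Gamma0 ψ) t

theorem gamma0A_mem (T : ℝ) (hT : 0 < T) (α : ℝ) (hα : 0 < α) (ψ : ℝ → ℝ)
    (hψ : ∃ M, ∀ s ∈ Set.Icc (0:ℝ) T, |ψ s| ≤ M)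
    (hψ0 : 0 ≤ ψ 0) :
    ∀ t ∈ Set.Icc (0:ℝ) T, Gamma0A α ψ t ∈ Set.Icc (0:ℝ) α := by
  obtain ⟨M, hM⟩ := hψ
  have hMnn : 0 ≤ M := le_trans (abs_nonneg _) (hM 0 ⟨le_refl _, le_of_lt hT⟩)
  set φ := Gamma0 ψ with hφdef
  have hg_bdd : ∀ u ∈ Set.Icc (0:ℝ) T,
      BddAbove ((fun s => max 0 (-ψ s)) '' Set.Icc 0 u) := by
    intro u hu
    refine ⟨M, ?_⟩
    rintro x ⟨s, hs, rfl⟩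
    have habs := abs_le.mp (hM s ⟨hs.1, hs.2.trans hu.2⟩)
    simp only [max_le_iff]
    exact ⟨hMnn, by linarith [habs.1]⟩
  have hφ_nonneg : ∀ u ∈ Set.Icc (0:ℝ) T, 0 ≤ φ u := by
    intro u hu
    have h1 : max 0 (-ψ u) ≤ sSup ((fun s => max 0 (-ψ s)) '' Set.Icc 0 u) :=
      le_csSup (hg_bdd u hu) ⟨u, ⟨hu.1, le_refl u⟩, rfl⟩
    have h2 : -ψ u ≤ max 0 (-ψ u) := le_max_right _ _
    simp only [hφdef, Gamma0]
    linarith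
  intro t ht
  obtain ⟨ht0, htT⟩ := ht
  have hφt : 0 ≤ φ t := hφ_nonneg t ⟨ht0, htT⟩
  have hbb : ∀ s : ℝ, 0 ≤ s → BddBelow (φ '' Set.Icc s t) := by
    intro s hs
    refine ⟨0, ?_⟩
    rintro x ⟨u, hu, rfl⟩
    exact hφ_nonneg u ⟨hs.trans hu.1, hu.2.trans htT⟩
  set F := fun s => min (max 0 (φ s - α)) (sInf (φ '' Set.Icc s t)) with hF
  have hA_ne : (F '' Set.Icc 0 t).Nonempty := ⟨F 0, 0, ⟨le_refl _, ht0⟩, rfl⟩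
  have hA_bdd : BddAbove (F '' Set.Icc 0 t) := by
    refine ⟨φ t, ?_⟩
    rintro x ⟨s, hs, rfl⟩
    have h1 : sInf (φ '' Set.Icc s t) ≤ φ t :=
      csInf_le (hbb s hs.1) ⟨t, ⟨hs.2, le_refl t⟩, rfl⟩
    exact le_trans (min_le_right _ _) h1
  have hsup_le : sSup (F '' Set.Icc 0 t) ≤ φ t := by
    refine csSup_le hA_ne ?_
    rintro x ⟨s, hs, rfl⟩
    have h1 : sInf (φ '' Set.Icc s t) ≤ φ t :=
      csInf_le (hbb s hs.1) ⟨t, ⟨hs.2, le_refl t⟩, rfl⟩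
    exact le_trans (min_le_right _ _) h1
  have hFt : φ t - α ≤ F t := by
    have h1 : sInf (φ '' Set.Icc t t) = φ t := by
      rw [Set.Icc_self, Set.image_singleton, csInf_singleton]
    rw [hF]
    simp only [h1]
    exact le_min (le_max_right _ _) (by linarith)
  have hsup_ge : φ t - α ≤ sSup (F '' Set.Icc 0 t) :=
    le_trans hFt (le_csSup hA_bdd ⟨t, ⟨ht0, le_refl t⟩, rfl⟩)
  simp only [Gamma0A, LambdaA, ← hφdef, ← hF, Set.mem_Icc]
  constructor <;> linarith
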